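/- Let X be a Banach space, T = {T(t,s) : t ≥ s > a₀} an evolution family on X, h : (a₀,∞) → (0,∞) a growth rate, a₀* > a₀, and J = [a₀*,∞). Then T admits an h-dichotomy on J if and only if the rescaled family T^h, given by T_h(t,s) := T(h⁻¹(eᵗ), h⁻¹(eˢ)), admits an exponential dichotomy (i.e., an h-dichotomy with h(t) = eᵗ) on [ln h(a₀*), ∞). Moreover, if P(t), t ∈ J, are the projections of the h-dichotomy of T, then P̃(t) := P(h⁻¹(eᵗ)) are projections of the exponential dichotomy of T^h. -/

import Mathlib

open Set Real

noncomputable section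

variable {X : Type*} [NormedAddCommGroup X] [NormedSpace ℝ X] [CompleteSpace X]

/-- An evolution family on `X` with parameter `a₀ ∈ ℝ ∪ {-∞}` (modelled as `EReal`):
`T t t = Id` for `t > a₀`; `T t s ∘ T s r = T t r` for `t ≥ s ≥ r > a₀`; and for every
`s > a₀` and `v ∈ X`, the map `t ↦ T t s v` is continuous on `[s, ∞)`. -/
def IsEvolutionFamily (a₀ : EReal) (T : ℝ → ℝ → X →L[ℝ] X) : Prop :=
  (∀ t : ℝ, a₀ < (t : EReal) → T t t = ContinuousLinearMap.id ℝ X) ∧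
  (∀ t s r : ℝ, a₀ < (r : EReal) → r ≤ s → s ≤ t → (T t s).comp (T s r) = T t r) ∧
  (∀ s : ℝ, a₀ < (s : EReal) → ∀ v : X, ContinuousOn (fun t => T t s v) (Set.Ici s))

/-- A growth rate: a bijective increasing map from `(a₀, ∞)` onto `(0, ∞)`. -/
def IsGrowthRate (a₀ : EReal) (h : ℝ → ℝ) : Prop :=
  StrictMonoOn h {t : ℝ | a₀ < (t : EReal)} ∧
  Set.BijOn h {t : ℝ | a₀ < (t : EReal)} (Set.Ioi (0 : ℝ))

/-- The family of projections `P` with constants `D, lam` witnesses an `h`-dichotomy of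
the evolution family `T` on the interval `J`:
(1) `P t` are (bounded) projections, commuting with the evolution family, and `T t s`
restricted to `Ker P s` is a bijection onto `Ker P t` for `t ≥ s` in `J`;
(2) `‖T t s ∘ P s‖ ≤ D (h t / h s)^(-lam)` for `t ≥ s` in `J`;
(3) for `t ≤ s` in `J`, the inverse `T t s : Ker P s → Ker P t` of
`T s t |_{Ker P t}` satisfies `‖T t s (Id - P s)‖ ≤ D (h s / h t)^(-lam)`; pointwise:
whenever `w ∈ Ker P t` satisfies `T s t w = (Id - P s) v`, then
`‖w‖ ≤ D (h s / h t)^(-lam) ‖v‖`. -/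
def HDichotomyProjWith (h : ℝ → ℝ) (T : ℝ → ℝ → X →L[ℝ] X) (J : Set ℝ)
    (P : ℝ → X →L[ℝ] X) (D lam : ℝ) : Prop :=
  (∀ t ∈ J, (P t).comp (P t) = P t) ∧
  (∀ t ∈ J, ∀ s ∈ J, s ≤ t → (P t).comp (T t s) = (T t s).comp (P s)) ∧
  (∀ t ∈ J, ∀ s ∈ J, s ≤ t →
    Set.BijOn (T t s) (LinearMap.ker (P s : X →ₗ[ℝ] X) : Set X) (LinearMap.ker (P t : X →ₗ[ℝ] X) : Set X)) ∧
  (∀ t ∈ J, ∀ s ∈ J, s ≤ t → ‖(T t s).comp (P s)‖ ≤ D * (h t / h s) ^ (-lam)) ∧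
  (∀ t ∈ J, ∀ s ∈ J, t ≤ s → ∀ v w : X, w ∈ LinearMap.ker (P t : X →ₗ[ℝ] X) →
    T s t w = v - P s v → ‖w‖ ≤ D * (h s / h t) ^ (-lam) * ‖v‖)

/-- `T` admits an `h`-dichotomy on `J`. -/
def HDichotomyOn (h : ℝ → ℝ) (T : ℝ → ℝ → X →L[ℝ] X) (J : Set ℝ) : Prop :=
  ∃ (P : ℝ → X →L[ℝ] X) (D lam : ℝ), 0 < D ∧ 0 < lam ∧ HDichotomyProjWith h T J P D lam

/-! The substitution `t ↦ h⁻¹(eᵗ)` is an increasing bijection of `[ln h(a₀*), ∞)` onto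
`[a₀*, ∞)` that turns `h` into `exp`, and each clause of a dichotomy is a statement about
pairs `s ≤ t` of the interval and the ratio of the growth rate at `s` and `t`. So a
dichotomy of `T` transports clause by clause to one of `T^h`, and the inverse substitution
`t ↦ ln h(t)` transports it back. -/

namespace HDichotomyProjWith

variable {E : Type*} [NormedAddCommGroup E] [NormedSpace ℝ E] {g g' φ : ℝ → ℝ}
  {T T' : ℝ → ℝ → E →L[ℝ] E} {J J' : Set ℝ} {P P' : ℝ → E →L[ℝ] E} {D lam : ℝ}

theorem reparam (hφ : MapsTo φ J' J) (hφ_mono : MonotoneOn φ J')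
    (hg : ∀ t ∈ J', g (φ t) = g' t) (hT : ∀ t ∈ J', ∀ s ∈ J', T' t s = T (φ t) (φ s))
    (hP : ∀ t ∈ J', P' t = P (φ t)) (hd : HDichotomyProjWith g T J P D lam) :
    HDichotomyProjWith g' T' J' P' D lam := by
  obtain ⟨proj, comm, bij, stable, unstable⟩ := hd
  refine ⟨fun t ht => ?_, fun t ht s hs hst => ?_, fun t ht s hs hst => ?_,
    fun t ht s hs hst => ?_, fun t ht s hs hts v w hw hvw => ?_⟩
  · rw [hP t ht]
    exact proj _ (hφ ht)
  · rw [hP t ht, hP s hs, hT t ht s hs]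
    exact comm _ (hφ ht) _ (hφ hs) (hφ_mono hs ht hst)
  · rw [hP t ht, hP s hs, hT t ht s hs]
    exact bij _ (hφ ht) _ (hφ hs) (hφ_mono hs ht hst)
  · rw [hP s hs, hT t ht s hs, ← hg t ht, ← hg s hs]
    exact stable _ (hφ ht) _ (hφ hs) (hφ_mono hs ht hst)
  · rw [hP t ht] at hw
    rw [hT s hs t ht, hP s hs] at hvw
    rw [← hg t ht, ← hg s hs]
    exact unstable _ (hφ ht) _ (hφ hs) (hφ_mono ht hs hts) v w hw hvw

end HDichotomyProjWith

theorem Ici_subset_setOf_lt_coe {a₀ : EReal} {a : ℝ} (ha : a₀ < (a : EReal)) :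
    Ici a ⊆ {t : ℝ | a₀ < (t : EReal)} := fun _ ht =>
  ha.trans_le (EReal.coe_le_coe_iff.2 ht)

namespace IsGrowthRate

variable {a₀ : EReal} {h hinv : ℝ → ℝ} {astar : ℝ}

theorem mapsTo_inv (hh : IsGrowthRate a₀ h)
    (hinv_spec : InvOn hinv h {t : ℝ | a₀ < (t : EReal)} (Ioi 0)) :
    MapsTo hinv (Ioi 0) {t : ℝ | a₀ < (t : EReal)} :=
  hinv_spec.1.mapsTo hh.2.surjOn

theorem monotone_inv_exp (hh : IsGrowthRate a₀ h)
    (hinv_spec : InvOn hinv h {t : ℝ | a₀ < (t : EReal)} (Ioi 0)) :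
    Monotone fun t => hinv (Real.exp t) := fun s t hst =>
  Function.monotoneOn_of_rightInvOn_of_mapsTo hh.1.monotoneOn hinv_spec.2
    (hh.mapsTo_inv hinv_spec) (Real.exp_pos s) (Real.exp_pos t) (Real.exp_le_exp.2 hst)

theorem mapsTo_inv_exp (hh : IsGrowthRate a₀ h)
    (hinv_spec : InvOn hinv h {t : ℝ | a₀ < (t : EReal)} (Ioi 0)) (hastar : a₀ < (astar : EReal)) :
    MapsTo (fun t => hinv (Real.exp t)) (Ici (Real.log (h astar))) (Ici astar) := fun t ht => by
  have hexp_log : Real.exp (Real.log (h astar)) = h astar := Real.exp_log (hh.2.mapsTo hastar)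
  calc astar = hinv (Real.exp (Real.log (h astar))) := by rw [hexp_log, hinv_spec.1 hastar]
    _ ≤ hinv (Real.exp t) := hh.monotone_inv_exp hinv_spec ht

theorem monotoneOn_log (hh : IsGrowthRate a₀ h) :
    MonotoneOn (fun t => Real.log (h t)) {t : ℝ | a₀ < (t : EReal)} := fun _ hs _ ht hst =>
  Real.log_le_log (hh.2.mapsTo hs) (hh.1.monotoneOn hs ht hst)

theorem mapsTo_log (hh : IsGrowthRate a₀ h) (hastar : a₀ < (astar : EReal)) :
    MapsTo (fun t => Real.log (h t)) (Ici astar) (Ici (Real.log (h astar))) := fun _ ht =>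
  hh.monotoneOn_log hastar (Ici_subset_setOf_lt_coe hastar ht) ht

end IsGrowthRate

theorem hDichotomy_iff_rescaled_expDichotomy_general
    (a₀ : EReal) (T : ℝ → ℝ → X →L[ℝ] X) (h hinv : ℝ → ℝ) (astar : ℝ)
    (hh : IsGrowthRate a₀ h)
    (hinv_spec : Set.InvOn hinv h {t : ℝ | a₀ < (t : EReal)} (Set.Ioi (0 : ℝ)))
    (hastar : a₀ < (astar : EReal)) :
    (HDichotomyOn h T (Set.Ici astar) ↔
      HDichotomyOn Real.exp (fun t s => T (hinv (Real.exp t)) (hinv (Real.exp s)))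
        (Set.Ici (Real.log (h astar)))) ∧
    (∀ (P : ℝ → X →L[ℝ] X) (D lam : ℝ), 0 < D → 0 < lam →
      HDichotomyProjWith h T (Set.Ici astar) P D lam →
      HDichotomyProjWith Real.exp (fun t s => T (hinv (Real.exp t)) (hinv (Real.exp s)))
        (Set.Ici (Real.log (h astar))) (fun t => P (hinv (Real.exp t))) D lam) := by
  have hS := Ici_subset_setOf_lt_coe hastar
  have inv_exp_log : ∀ t ∈ Ici astar, hinv (Real.exp (Real.log (h t))) = t := fun t ht => by
    rw [Real.exp_log (hh.2.mapsTo (hS ht)), hinv_spec.1 (hS ht)]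
  have rescale : ∀ {P D lam}, HDichotomyProjWith h T (Ici astar) P D lam →
      HDichotomyProjWith Real.exp (fun t s => T (hinv (Real.exp t)) (hinv (Real.exp s)))
        (Ici (Real.log (h astar))) (fun t => P (hinv (Real.exp t))) D lam :=
    .reparam (hh.mapsTo_inv_exp hinv_spec hastar) ((hh.monotone_inv_exp hinv_spec).monotoneOn _)
      (fun t _ => hinv_spec.2 (Real.exp_pos t)) (fun _ _ _ _ => rfl) (fun _ _ => rfl)
  have unscale : ∀ {P D lam}, HDichotomyProjWith Real.exp
      (fun t s => T (hinv (Real.exp t)) (hinv (Real.exp s))) (Ici (Real.log (h astar))) P D lam →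
      HDichotomyProjWith h T (Ici astar) (fun t => P (Real.log (h t))) D lam :=
    .reparam (hh.mapsTo_log hastar) (hh.monotoneOn_log.mono hS)
      (fun t ht => Real.exp_log (hh.2.mapsTo (hS ht)))
      (fun t ht s hs => by simp only [inv_exp_log t ht, inv_exp_log s hs]) (fun _ _ => rfl)
  exact ⟨⟨fun ⟨_, D, lam, hD, hlam, hP⟩ => ⟨_, D, lam, hD, hlam, rescale hP⟩,
    fun ⟨_, D, lam, hD, hlam, hP⟩ => ⟨_, D, lam, hD, hlam, unscale hP⟩⟩,
    fun _ _ _ _ _ => rescale⟩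

/-- `T` admits an `h`-dichotomy on `[a₀*, ∞)` iff the rescaled family `T_h`
admits an exponential dichotomy (an `h`-dichotomy with `h = exp`) on `[ln h(a₀*), ∞)`;
moreover, if `P t`, `t ∈ [a₀*, ∞)`, are projections of the `h`-dichotomy of `T` with
constants `D, lam`, then `P̃ t := P (h⁻¹ (e^t))` are projections of the exponential
dichotomy of `T_h` (with the same constants). -/
theorem hDichotomy_iff_rescaled_expDichotomy
    (a₀ : EReal) (T : ℝ → ℝ → X →L[ℝ] X) (h hinv : ℝ → ℝ) (astar : ℝ)
    (hT : IsEvolutionFamily a₀ T)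
    (hh : IsGrowthRate a₀ h)
    (hinv_spec : Set.InvOn hinv h {t : ℝ | a₀ < (t : EReal)} (Set.Ioi (0 : ℝ)))
    (hinv_maps : Set.MapsTo hinv (Set.Ioi (0 : ℝ)) {t : ℝ | a₀ < (t : EReal)})
    (hastar : a₀ < (astar : EReal)) :
    (HDichotomyOn h T (Set.Ici astar) ↔
      HDichotomyOn Real.exp (fun t s => T (hinv (Real.exp t)) (hinv (Real.exp s)))
        (Set.Ici (Real.log (h astar)))) ∧
    (∀ (P : ℝ → X →L[ℝ] X) (D lam : ℝ), 0 < D → 0 < lam →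
      HDichotomyProjWith h T (Set.Ici astar) P D lam →
      HDichotomyProjWith Real.exp (fun t s => T (hinv (Real.exp t)) (hinv (Real.exp s)))
        (Set.Ici (Real.log (h astar))) (fun t => P (hinv (Real.exp t))) D lam) :=
  hDichotomy_iff_rescaled_expDichotomy_general a₀ T h hinv astar hh hinv_spec hastar
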